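/- arXiv:0803.1141 — 4 statements merged into one kernel-verified Lean document; each statement's English description precedes it below -/
import Mathlib

section
/- Let F : [a,b] → ℝ be differentiable with F′ monotone on [a,b], and suppose either F′(x) ≥ ε > 0 for all x ∈ [a,b] or F′(x) ≤ −ε < 0 for all x ∈ [a,b]. Then |∫_a^b e^{iF(x)} dx| ≤ 4/ε. -/
/-!
Write `e^{iF} = (1/F') · F' e^{iF}`. The factor `F' e^{iF}` is the derivative of `-i e^{iF}`, so
its integral over any subinterval has modulus at most `2`; the weight `1/F'` is monotone with
values in `[0, 1/ε]`. A second mean value theorem then bounds the integral by `2/ε`. It is proved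
by the layer-cake formula `φ x = ∫_0^M 1[t < φ x] dt` and Fubini: each slice `{x | t < φ x}` of a
monotone weight is an interval. The case `F' ≤ -ε` reduces to `-F` by complex conjugation.
-/

open Set MeasureTheory Complex

section SecondMeanValue

variable {E : Type*} [NormedAddCommGroup E] [NormedSpace ℝ E] {g : ℝ → E} {a b C : ℝ}

theorem norm_setIntegral_le_of_ordConnected (hab : a ≤ b)
    (hC : ∀ u v, a ≤ u → u ≤ v → v ≤ b → ‖∫ x in u..v, g x‖ ≤ C)
    {s : Set ℝ} (hs : s.OrdConnected) (hsub : s ⊆ Icc a b) :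
    ‖∫ x in s, g x‖ ≤ C := by
  rcases s.eq_empty_or_nonempty with rfl | hne
  · simpa using hC a a le_rfl le_rfl hab
  have hbelow : BddBelow s := ⟨a, fun x hx => (hsub hx).1⟩
  have habove : BddAbove s := ⟨b, fun x hx => (hsub hx).2⟩
  have hIcc : s ⊆ Icc (sInf s) (sSup s) := subset_Icc_csInf_csSup hbelow habove
  have hIoo : Ioo (sInf s) (sSup s) ⊆ s :=
    IsConnected.Ioo_csInf_csSup_subset ⟨hne, hs.isPreconnected⟩ hbelow habove
  have hae : s =ᵐ[volume] Ioc (sInf s) (sSup s) :=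
    (hIcc.eventuallyLE.trans Ioc_ae_eq_Icc.symm.le).antisymm
      (Ioo_ae_eq_Ioc.symm.le.trans hIoo.eventuallyLE)
  have hle : sInf s ≤ sSup s := csInf_le_csSup hne hbelow habove
  rw [setIntegral_congr_set hae, ← intervalIntegral.integral_of_le hle]
  exact hC _ _ (le_csInf hne fun x hx => (hsub hx).1) hle (csSup_le hne fun x hx => (hsub hx).2)

theorem norm_setIntegral_smul_le_of_monotone_or_antitone [CompleteSpace E] (hab : a ≤ b)
    {φ : ℝ → ℝ} {M : ℝ}
    (hφ : Monotone φ ∨ Antitone φ) (hφM : ∀ x ∈ Icc a b, φ x ∈ Icc 0 M)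
    (hg : IntegrableOn g (Ioc a b))
    (hC : ∀ u v, a ≤ u → u ≤ v → v ≤ b → ‖∫ x in u..v, g x‖ ≤ C) :
    ‖∫ x in Ioc a b, φ x • g x‖ ≤ C * M := by
  have hM : 0 ≤ M := (hφM a ⟨le_rfl, hab⟩).1.trans (hφM a ⟨le_rfl, hab⟩).2
  have hφm : Measurable φ := hφ.elim Monotone.measurable Antitone.measurable
  set S : Set (ℝ × ℝ) := {q | q.2 < φ q.1}
  have hS : MeasurableSet S := measurableSet_lt measurable_snd (hφm.comp measurable_fst)
  let H : ℝ → ℝ → E := fun x t => S.indicator (fun q => g q.1) (x, t)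
  have hlayer : ∀ x ∈ Ioc a b, ∫ t in Ioc 0 M, H x t = φ x • g x := by
    intro x hx
    have hφx := hφM x (Ioc_subset_Icc_self hx)
    have hcut : Ioc 0 M ∩ Iio (φ x) = Ioo 0 (φ x) := by
      ext t
      simp only [mem_inter_iff, mem_Ioc, mem_Iio, mem_Ioo]
      constructor
      · exact fun h => ⟨h.1.1, h.2⟩
      · exact fun h => ⟨⟨h.1, h.2.le.trans hφx.2⟩, h.2⟩
    change ∫ t in Ioc 0 M, (Iio (φ x)).indicator (fun _ => g x) t = _
    rw [setIntegral_indicator measurableSet_Iio, hcut, setIntegral_const,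
      Real.volume_real_Ioo_of_le hφx.1, sub_zero]
  have hslice : ∀ t, ‖∫ x in Ioc a b, H x t‖ ≤ C := by
    intro t
    change ‖∫ x in Ioc a b, {x | t < φ x}.indicator g x‖ ≤ C
    rw [setIntegral_indicator (measurableSet_lt measurable_const hφm)]
    refine norm_setIntegral_le_of_ordConnected hab hC (ordConnected_Ioc.inter ?_)
      (inter_subset_left.trans Ioc_subset_Icc_self)
    rcases hφ with hφ | hφ
    · exact IsUpperSet.ordConnected fun x y hxy hx => hx.trans_le (hφ hxy)
    · exact IsLowerSet.ordConnected fun x y hxy hx => hx.trans_le (hφ hxy)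
  have hint : Integrable (Function.uncurry H)
      ((volume.restrict (Ioc a b)).prod (volume.restrict (Ioc 0 M))) :=
    (hg.comp_fst _).indicator hS
  calc ‖∫ x in Ioc a b, φ x • g x‖ = ‖∫ t in Ioc 0 M, ∫ x in Ioc a b, H x t‖ := by
        rw [← integral_integral_swap hint, setIntegral_congr_fun measurableSet_Ioc hlayer]
    _ ≤ C * volume.real (Ioc 0 M) :=
        norm_setIntegral_le_of_norm_le_const measure_Ioc_lt_top fun t _ => hslice t
    _ = C * M := by rw [Real.volume_real_Ioc_of_le hM, sub_zero]

theorem norm_intervalIntegral_smul_le_of_monotoneOn [CompleteSpace E] (hab : a ≤ b)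
    {φ : ℝ → ℝ} {M : ℝ}
    (hφ : MonotoneOn φ (Icc a b) ∨ AntitoneOn φ (Icc a b)) (hφM : ∀ x ∈ Icc a b, φ x ∈ Icc 0 M)
    (hg : IntervalIntegrable g volume a b)
    (hC : ∀ u v, a ≤ u → u ≤ v → v ≤ b → ‖∫ x in u..v, g x‖ ≤ C) :
    ‖∫ x in a..b, φ x • g x‖ ≤ C * M := by
  -- a globally monotone extension of `φ`, hence a measurable one
  set ψ : ℝ → ℝ := fun x => φ (projIcc a b hab x)
  have hψφ : EqOn ψ φ (Icc a b) := fun x hx => by simp only [ψ, projIcc_of_mem hab hx]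
  have hψ : Monotone ψ ∨ Antitone ψ := hφ.imp
    (fun h _ _ hxy => h (projIcc a b hab _).2 (projIcc a b hab _).2 (monotone_projIcc hab hxy))
    (fun h _ _ hxy => h (projIcc a b hab _).2 (projIcc a b hab _).2 (monotone_projIcc hab hxy))
  rw [intervalIntegral.integral_of_le hab, ← setIntegral_congr_fun measurableSet_Ioc
    fun x hx => congrArg (· • g x) (hψφ (Ioc_subset_Icc_self hx))]
  exact norm_setIntegral_smul_le_of_monotone_or_antitone hab hψ
    (fun x hx => hψφ hx ▸ hφM x hx)
    ((intervalIntegrable_iff_integrableOn_Ioc_of_le hab).1 hg) hC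

end SecondMeanValue

theorem continuousOn_exp_I_mul_of_hasDerivAt {s : Set ℝ} {F F' : ℝ → ℝ}
    (hderiv : ∀ x ∈ s, HasDerivAt F (F' x) x) : ContinuousOn (fun x => exp (I * F x)) s :=
  fun x hx => ((hderiv x hx).ofReal_comp.const_mul I).cexp.continuousAt.continuousWithinAt

theorem norm_integral_deriv_smul_exp_mul_I_le_two {u v : ℝ} {F F' : ℝ → ℝ}
    (hderiv : ∀ x ∈ uIcc u v, HasDerivAt F (F' x) x) (hF' : IntervalIntegrable F' volume u v) :
    ‖∫ x in u..v, F' x • exp (I * F x)‖ ≤ 2 := by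
  have hprim : ∀ x ∈ uIcc u v,
      HasDerivAt (fun y => -I * exp (I * F y)) (F' x • exp (I * F x)) x := by
    intro x hx
    refine ((((hderiv x hx).ofReal_comp.const_mul I).cexp).const_mul (-I)).congr_deriv ?_
    rw [real_smul]
    linear_combination (-(F' x : ℂ) * exp (I * F x)) * I_sq
  rw [intervalIntegral.integral_eq_sub_of_hasDerivAt hprim
    (hF'.smul_continuousOn (continuousOn_exp_I_mul_of_hasDerivAt hderiv))]
  calc ‖-I * exp (I * F v) - -I * exp (I * F u)‖
      ≤ ‖-I * exp (I * F v)‖ + ‖-I * exp (I * F u)‖ := norm_sub_le _ _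
    _ = 2 := by simp only [norm_mul, norm_neg, norm_I, norm_exp_I_mul_ofReal]; norm_num

theorem norm_integral_exp_mul_I_le_of_le_deriv {a b ε : ℝ} {F F' : ℝ → ℝ} (hab : a ≤ b)
    (hε : 0 < ε) (hderiv : ∀ x ∈ Icc a b, HasDerivAt F (F' x) x)
    (hmono : MonotoneOn F' (Icc a b) ∨ AntitoneOn F' (Icc a b))
    (hpos : ∀ x ∈ Icc a b, ε ≤ F' x) :
    ‖∫ x in a..b, exp (I * F x)‖ ≤ 2 / ε := by
  have hF'pos : ∀ x ∈ Icc a b, 0 < F' x := fun x hx => hε.trans_le (hpos x hx)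
  have hF' : IntervalIntegrable F' volume a b := by
    rw [← uIcc_of_le hab] at hmono
    exact hmono.elim MonotoneOn.intervalIntegrable AntitoneOn.intervalIntegrable
  have hinv :
      MonotoneOn (fun x => (F' x)⁻¹) (Icc a b) ∨ AntitoneOn (fun x => (F' x)⁻¹) (Icc a b) :=
    hmono.symm.imp
      (fun h x hx y hy hxy => inv_anti₀ (hF'pos y hy) (h hx hy hxy))
      (fun h x hx y hy hxy => inv_anti₀ (hF'pos x hx) (h hx hy hxy))
  have hosc : ∀ u v, a ≤ u → u ≤ v → v ≤ b → ‖∫ x in u..v, F' x • exp (I * F x)‖ ≤ 2 := by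
    intro u v hau huv hvb
    have hsub : uIcc u v ⊆ Icc a b := by
      rw [uIcc_of_le huv]; exact Icc_subset_Icc hau hvb
    exact norm_integral_deriv_smul_exp_mul_I_le_two (fun x hx => hderiv x (hsub hx))
      (hF'.mono_set (by rwa [uIcc_of_le hab]))
  calc ‖∫ x in a..b, exp (I * F x)‖
      = ‖∫ x in a..b, (F' x)⁻¹ • F' x • exp (I * F x)‖ := by
        rw [intervalIntegral.integral_congr fun x hx => ?_]
        rw [uIcc_of_le hab] at hx
        rw [smul_smul, inv_mul_cancel₀ (hF'pos x hx).ne', one_smul]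
    _ ≤ 2 * ε⁻¹ := norm_intervalIntegral_smul_le_of_monotoneOn hab hinv
        (fun x hx => ⟨(inv_pos.2 (hF'pos x hx)).le, inv_anti₀ hε (hpos x hx)⟩)
        (hF'.smul_continuousOn (continuousOn_exp_I_mul_of_hasDerivAt (uIcc_of_le hab ▸ hderiv)))
        hosc
    _ = 2 / ε := (div_eq_mul_inv _ _).symm

theorem norm_integral_exp_mul_I_neg (a b : ℝ) (F : ℝ → ℝ) :
    ‖∫ x in a..b, exp (I * ↑(-F x))‖ = ‖∫ x in a..b, exp (I * F x)‖ := by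
  have hconj : ∀ x, exp (I * ↑(-F x)) = (starRingEnd ℂ) (exp (I * F x)) := fun x => by
    rw [← exp_conj, map_mul, conj_I, conj_ofReal, ofReal_neg]
    ring_nf
  simp only [hconj, intervalIntegral.intervalIntegral_conj, norm_conj]

theorem stmt_4 (a b ε : ℝ) (hab : a ≤ b) (hε : 0 < ε)
    (F F' : ℝ → ℝ)
    (hderiv : ∀ x ∈ Set.Icc a b, HasDerivAt F (F' x) x)
    (hmono : MonotoneOn F' (Set.Icc a b) ∨ AntitoneOn F' (Set.Icc a b))
    (hsign : (∀ x ∈ Set.Icc a b, ε ≤ F' x) ∨ (∀ x ∈ Set.Icc a b, F' x ≤ -ε)) :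
    ‖∫ x in a..b, Complex.exp (Complex.I * F x)‖ ≤ 4 / ε := by
  have hle : 2 / ε ≤ 4 / ε := by gcongr; norm_num
  rcases hsign with hpos | hneg
  · exact (norm_integral_exp_mul_I_le_of_le_deriv hab hε hderiv hmono hpos).trans hle
  · rw [← norm_integral_exp_mul_I_neg]
    refine (norm_integral_exp_mul_I_le_of_le_deriv hab hε (fun x hx => (hderiv x hx).neg)
      (hmono.symm.imp AntitoneOn.neg MonotoneOn.neg) fun x hx => le_neg.2 (hneg x hx)).trans hle
end

section
/- Let F : [a,b] → ℝ be twice differentiable with either F″(x) ≥ ε > 0 for all x ∈ [a,b] or F″(x) ≤ −ε < 0 for all x ∈ [a,b]. Then |∫_a^b e^{iF(x)} dx| ≤ 8/√ε. -/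
open Complex Set intervalIntegral MeasureTheory
open scoped ComplexConjugate

/-!
Integrating by parts against `-1 / F'` bounds the integral by `4 / λ` on any interval where
`F'` is monotone and `|F'| ≥ λ`. If `F'' ≥ ε`, then `|F' x| ≥ ε |x - m|` for some `m ∈ [a, b]`
(a zero of `F'`, or an endpoint), so `|F'| ≥ 2 √ε` away from the interval of radius
`δ = 2 / √ε` around `m`. The two tails then contribute at most `2 / √ε` each, and the middle
piece at most its length `4 / √ε`. The case `F'' ≤ -ε` follows by complex conjugation.
-/

lemma hasDerivAt_cexp_I_mul_ofReal {F : ℝ → ℝ} {F'x x : ℝ} (h : HasDerivAt F F'x x) :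
    HasDerivAt (fun y => exp (I * F y)) (I * F'x * exp (I * F x)) x := by
  simpa [mul_comm] using (h.ofReal_comp.const_mul I).cexp

lemma norm_cexp_I_mul_ofReal (r : ℝ) : ‖exp (I * r)‖ = 1 := by
  rw [mul_comm, norm_exp_ofReal_mul_I]

/-- Integrate by parts: the boundary terms are at most `M` each, and the remainder is at most the
variation `h v - h u ≤ 2 M` of the monotone `h`. -/
theorem norm_integral_mul_deriv_le_of_monotone {u v M : ℝ} (huv : u ≤ v) {h ρ : ℝ → ℝ}
    {g g' : ℝ → ℂ} (hh : ∀ x ∈ Icc u v, HasDerivAt h (ρ x) x)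
    (hρ : ∀ x ∈ Icc u v, 0 ≤ ρ x)
    (hhM : ∀ x ∈ Icc u v, |h x| ≤ M) (hg : ∀ x ∈ Icc u v, HasDerivAt g (g' x) x)
    (hg' : IntervalIntegrable g' volume u v) (hg1 : ∀ x ∈ Icc u v, ‖g x‖ ≤ 1) :
    ‖∫ x in u..v, (h x : ℂ) * g' x‖ ≤ 4 * M := by
  have hρ_int : IntervalIntegrable ρ volume u v :=
    (intervalIntegrable_iff_integrableOn_Ioc_of_le huv).2 <| integrableOn_deriv_of_nonneg
      (fun x hx => (hh x hx).continuousAt.continuousWithinAt)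
      (fun x hx => hh x (Ioo_subset_Icc_self hx)) (fun x hx => hρ x (Ioo_subset_Icc_self hx))
  rw [← uIcc_of_le huv] at hh hg
  rw [integral_mul_deriv_eq_deriv_mul (fun x hx => (hh x hx).ofReal_comp) hg
    ⟨hρ_int.1.ofReal, hρ_int.2.ofReal⟩ hg']
  have hu : u ∈ Icc u v := left_mem_Icc.2 huv
  have hv : v ∈ Icc u v := right_mem_Icc.2 huv
  have hbdry : ∀ x ∈ Icc u v, ‖(h x : ℂ) * g x‖ ≤ M := fun x hx => by
    rw [norm_mul, norm_real, Real.norm_eq_abs]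
    exact (mul_le_of_le_one_right (abs_nonneg _) (hg1 x hx)).trans (hhM x hx)
  have hrem : ‖∫ x in u..v, (ρ x : ℂ) * g x‖ ≤ h v - h u := by
    rw [← integral_eq_sub_of_hasDerivAt hh hρ_int]
    refine norm_integral_le_of_norm_le huv (ae_of_all _ fun x hx => ?_) hρ_int
    rw [norm_mul, norm_real, Real.norm_eq_abs, abs_of_nonneg (hρ x (Ioc_subset_Icc_self hx))]
    exact mul_le_of_le_one_right (hρ x (Ioc_subset_Icc_self hx)) (hg1 x (Ioc_subset_Icc_self hx))
  linarith [norm_sub_le ((h v : ℂ) * g v - (h u : ℂ) * g u) (∫ x in u..v, (ρ x : ℂ) * g x),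
    norm_sub_le ((h v : ℂ) * g v) ((h u : ℂ) * g u), hbdry u hu, hbdry v hv,
    le_abs_self (h v), neg_abs_le (h u), hhM u hu, hhM v hv]

theorem norm_integral_cexp_le_of_le_abs_deriv {u v lam : ℝ} (huv : u ≤ v) (hlam : 0 < lam)
    {F F' F'' : ℝ → ℝ} (hF : ∀ x ∈ Icc u v, HasDerivAt F (F' x) x)
    (hF' : ∀ x ∈ Icc u v, HasDerivAt F' (F'' x) x) (hF'' : ∀ x ∈ Icc u v, 0 ≤ F'' x)
    (hlow : ∀ x ∈ Icc u v, lam ≤ |F' x|) :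
    ‖∫ x in u..v, exp (I * F x)‖ ≤ 4 / lam := by
  have hne : ∀ x ∈ Icc u v, F' x ≠ 0 := fun x hx => abs_pos.1 (hlam.trans_le (hlow x hx))
  have hF'_cont : ContinuousOn F' (uIcc u v) := fun x hx =>
    (hF' x (uIcc_of_le huv ▸ hx)).continuousAt.continuousWithinAt
  have hF_cont : ContinuousOn F (uIcc u v) := fun x hx =>
    (hF x (uIcc_of_le huv ▸ hx)).continuousAt.continuousWithinAt
  -- `exp (i F) = h g'` with `h = -1 / F'` monotone and `g = i exp (i F)` unimodular
  have hfactor : ∀ x ∈ uIcc u v, exp (I * F x)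
      = ((-(F' x)⁻¹ : ℝ) : ℂ) * (I * (I * F' x * exp (I * F x))) := fun x hx => by
    have : (F' x : ℂ) ≠ 0 := ofReal_ne_zero.2 (hne x (uIcc_of_le huv ▸ hx))
    push_cast
    field_simp
    rw [I_sq]
    ring
  have hh : ∀ x ∈ Icc u v, HasDerivAt (fun y => -(F' y)⁻¹) (F'' x / F' x ^ 2) x :=
    fun x hx => ((hF' x hx).inv (hne x hx)).neg.congr_deriv (by ring)
  rw [integral_congr hfactor, div_eq_mul_inv]
  exact norm_integral_mul_deriv_le_of_monotone huv hh
    (fun x hx => div_nonneg (hF'' x hx) (sq_nonneg _))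
    (fun x hx => by rw [abs_neg, abs_inv]; exact inv_anti₀ hlam (hlow x hx))
    (fun x hx => (hasDerivAt_cexp_I_mul_ofReal (hF x hx)).const_mul I)
    (ContinuousOn.intervalIntegrable (by fun_prop))
    (fun x _ => by rw [norm_mul, norm_I, norm_cexp_I_mul_ofReal, one_mul])

/-- `m` is where `f` crosses zero, or the endpoint nearest to the crossing if `f` has no zero. -/
lemma exists_mul_abs_sub_le_abs_of_mul_sub_le {a b ε : ℝ} (hab : a ≤ b) {f : ℝ → ℝ}
    (hf : ContinuousOn f (Icc a b))
    (hgrowth : ∀ x ∈ Icc a b, ∀ y ∈ Icc a b, x ≤ y → ε * (y - x) ≤ f y - f x) :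
    ∃ m ∈ Icc a b, ∀ x ∈ Icc a b, ε * |x - m| ≤ |f x| := by
  obtain ⟨m, hm, hleft, hright⟩ :
      ∃ m ∈ Icc a b, (m = a ∨ f m ≤ 0) ∧ (m = b ∨ 0 ≤ f m) := by
    by_cases ha : 0 ≤ f a
    · exact ⟨a, left_mem_Icc.2 hab, Or.inl rfl, Or.inr ha⟩
    by_cases hb : f b ≤ 0
    · exact ⟨b, right_mem_Icc.2 hab, Or.inr hb, Or.inl rfl⟩
    obtain ⟨m, hm, hm0⟩ :=
      intermediate_value_Icc hab hf ⟨(not_le.1 ha).le, (not_le.1 hb).le⟩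
    exact ⟨m, hm, Or.inr hm0.le, Or.inr hm0.ge⟩
  refine ⟨m, hm, fun x hx => ?_⟩
  rcases le_total x m with hxm | hmx
  · rcases hleft with rfl | hfm
    · rw [le_antisymm hxm hx.1, sub_self, abs_zero, mul_zero]; exact abs_nonneg _
    · rw [abs_of_nonpos (sub_nonpos.2 hxm)]
      linarith [hgrowth x hx m hm hxm, neg_abs_le (f x)]
  · rcases hright with rfl | hfm
    · rw [le_antisymm hx.2 hmx, sub_self, abs_zero, mul_zero]; exact abs_nonneg _
    · rw [abs_of_nonneg (sub_nonneg.2 hmx)]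
      linarith [hgrowth m hm x hx hmx, le_abs_self (f x)]

theorem norm_integral_cexp_le_of_le_mul_abs_sub {u v m ε δ : ℝ} (huv : u ≤ v) (hε : 0 < ε)
    (hδ : 0 < δ) {F F' F'' : ℝ → ℝ} (hF : ∀ x ∈ Icc u v, HasDerivAt F (F' x) x)
    (hF' : ∀ x ∈ Icc u v, HasDerivAt F' (F'' x) x) (hF'' : ∀ x ∈ Icc u v, 0 ≤ F'' x)
    (hF'm : ∀ x ∈ Icc u v, ε * |x - m| ≤ |F' x|) (hfar : ∀ x ∈ Ioo u v, δ ≤ |x - m|) :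
    ‖∫ x in u..v, exp (I * F x)‖ ≤ 4 / (ε * δ) := by
  rcases huv.eq_or_lt with rfl | huv'
  · rw [integral_same, norm_zero]; positivity
  have hfar' : Icc u v ⊆ {x | δ ≤ |x - m|} := by
    rw [← closure_Ioo huv'.ne]
    exact closure_minimal hfar (isClosed_le continuous_const (by fun_prop))
  exact norm_integral_cexp_le_of_le_abs_deriv huv (by positivity) hF hF' hF''
    fun x hx => (mul_le_mul_of_nonneg_left (hfar' hx) hε.le).trans (hF'm x hx)

lemma norm_integral_le_norm_add_norm_add_norm {E : Type*} [NormedAddCommGroup E] [NormedSpace ℝ E]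
    {f : ℝ → E} {a b c d : ℝ} (hac : a ≤ c) (hcd : c ≤ d) (hdb : d ≤ b)
    (hf : ContinuousOn f (Icc a b)) :
    ‖∫ x in a..b, f x‖
      ≤ ‖∫ x in a..c, f x‖ + ‖∫ x in c..d, f x‖ + ‖∫ x in d..b, f x‖ := by
  have hint : ∀ u ∈ Icc a b, ∀ v ∈ Icc a b, IntervalIntegrable f volume u v :=
    fun u hu v hv => (hf.mono (uIcc_subset_Icc hu hv)).intervalIntegrable
  have ha : a ∈ Icc a b := ⟨le_rfl, hac.trans (hcd.trans hdb)⟩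
  have hb : b ∈ Icc a b := ⟨hac.trans (hcd.trans hdb), le_rfl⟩
  have hc : c ∈ Icc a b := ⟨hac, hcd.trans hdb⟩
  have hd : d ∈ Icc a b := ⟨hac.trans hcd, hdb⟩
  rw [← integral_add_adjacent_intervals (hint a ha c hc) (hint c hc b hb),
    ← integral_add_adjacent_intervals (hint c hc d hd) (hint d hd b hb), ← add_assoc]
  exact norm_add₃_le

theorem norm_integral_cexp_le_of_le_deriv_deriv {a b ε : ℝ} (hab : a ≤ b) (hε : 0 < ε)
    {F F' F'' : ℝ → ℝ} (hF : ∀ x ∈ Icc a b, HasDerivAt F (F' x) x)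
    (hF' : ∀ x ∈ Icc a b, HasDerivAt F' (F'' x) x) (hF'' : ∀ x ∈ Icc a b, ε ≤ F'' x) :
    ‖∫ x in a..b, exp (I * F x)‖ ≤ 8 / √ε := by
  have hF'_cont : ContinuousOn F' (Icc a b) := fun x hx =>
    (hF' x hx).continuousAt.continuousWithinAt
  have hgrowth :
      ∀ x ∈ Icc a b, ∀ y ∈ Icc a b, x ≤ y → ε * (y - x) ≤ F' y - F' x := by
    refine (convex_Icc a b).mul_sub_le_image_sub_of_le_deriv hF'_cont
      (fun x hx => (hF' x (interior_subset hx)).differentiableAt.differentiableWithinAt)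
      (fun x hx => ?_)
    rw [(hF' x (interior_subset hx)).deriv]
    exact hF'' x (interior_subset hx)
  obtain ⟨m, hm, hF'm⟩ := exists_mul_abs_sub_le_abs_of_mul_sub_le hab hF'_cont hgrowth
  have hsqrt : 0 < √ε := Real.sqrt_pos.2 hε
  set δ := 2 / √ε
  have hδ : 0 < δ := by positivity
  have hεδ : 4 / (ε * δ) = 2 / √ε := by
    simp only [δ]
    field_simp
    rw [Real.sq_sqrt hε.le]
    ring
  have htail : ∀ u v, a ≤ u → u ≤ v → v ≤ b → (∀ x ∈ Ioo u v, δ ≤ |x - m|) →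
      ‖∫ x in u..v, exp (I * F x)‖ ≤ 2 / √ε := fun u v hau huv hvb hfar => by
    have hsub : Icc u v ⊆ Icc a b := Icc_subset_Icc hau hvb
    rw [← hεδ]
    exact norm_integral_cexp_le_of_le_mul_abs_sub huv hε hδ
      (fun x hx => hF x (hsub hx)) (fun x hx => hF' x (hsub hx))
      (fun x hx => hε.le.trans (hF'' x (hsub hx))) (fun x hx => hF'm x (hsub hx)) hfar
  set c := max a (m - δ)
  set d := min b (m + δ)
  have hac : a ≤ c := le_max_left _ _
  have hcd : c ≤ d :=
    max_le (le_min hab (by linarith [hm.1])) (le_min (by linarith [hm.2]) (by linarith))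
  have hdb : d ≤ b := min_le_left _ _
  have hleft := htail a c le_rfl hac (hcd.trans hdb) fun x hx => by
    have : x < m - δ := (lt_max_iff.1 hx.2).resolve_left hx.1.not_gt
    rw [abs_sub_comm]; exact le_abs.2 (Or.inl (by linarith))
  have hright := htail d b (hac.trans hcd) hdb le_rfl fun x hx => by
    have : m + δ < x := (min_lt_iff.1 hx.1).resolve_left hx.2.not_gt
    exact le_abs.2 (Or.inl (by linarith))
  have hmid : ‖∫ x in c..d, exp (I * F x)‖ ≤ 4 / √ε := by
    refine (norm_integral_le_of_norm_le_const fun x _ =>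
      (norm_cexp_I_mul_ofReal (F x)).le).trans ?_
    rw [one_mul, abs_of_nonneg (sub_nonneg.2 hcd)]
    linarith [min_le_right b (m + δ), le_max_right a (m - δ), show 4 / √ε = 2 * δ by ring]
  have hf : ContinuousOn (fun x => exp (I * F x)) (Icc a b) := fun x hx =>
    (hasDerivAt_cexp_I_mul_ofReal (hF x hx)).continuousAt.continuousWithinAt
  linarith [norm_integral_le_norm_add_norm_add_norm hac hcd hdb hf,
    show 8 / √ε = 2 / √ε + 4 / √ε + 2 / √ε by ring]

lemma integral_cexp_I_mul_neg (F : ℝ → ℝ) (a b : ℝ) :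
    ∫ x in a..b, exp (I * ↑(-F x)) = conj (∫ x in a..b, exp (I * F x)) := by
  rw [← intervalIntegral_conj]
  refine integral_congr fun x _ => ?_
  rw [← exp_conj, map_mul, conj_I, conj_ofReal, ofReal_neg, mul_neg, neg_mul]

theorem stmt_5 (a b ε : ℝ) (hab : a ≤ b) (hε : 0 < ε)
    (F F' F'' : ℝ → ℝ)
    (hderiv : ∀ x ∈ Set.Icc a b, HasDerivAt F (F' x) x)
    (hderiv' : ∀ x ∈ Set.Icc a b, HasDerivAt F' (F'' x) x)
    (hsign : (∀ x ∈ Set.Icc a b, ε ≤ F'' x) ∨ (∀ x ∈ Set.Icc a b, F'' x ≤ -ε)) :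
    ‖∫ x in a..b, Complex.exp (Complex.I * F x)‖ ≤ 8 / Real.sqrt ε := by
  rcases hsign with hconvex | hconcave
  · exact norm_integral_cexp_le_of_le_deriv_deriv hab hε hderiv hderiv' hconvex
  · have := norm_integral_cexp_le_of_le_deriv_deriv hab hε (F := fun x => -F x)
      (fun x hx => (hderiv x hx).neg) (fun x hx => (hderiv' x hx).neg)
      (fun x hx => le_neg.2 (hconcave x hx))
    rwa [integral_cexp_I_mul_neg, RCLike.norm_conj] at this
end

section
/- As T → ∞, ∑_{1 ≤ m < n ≤ T} 1/(√(mn) · log(n/m)) = O(T log T). -/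
/-!
Since `log (n / m) ≥ 1 - m / n` and `√(mn) ≥ m`, each term is at most `1 / √(mn) + 1 / (n - m)`.
Summed over `m < n` these give `O(1)` and `O(log n)` respectively, so the inner sum is
`O(log n)` and the double sum is `O(T log T)`.
-/

open Filter Asymptotics Finset Real

lemma one_div_sqrt_mul_mul_log_div_le {m n : ℝ} (hm : 0 < m) (hmn : m < n) :
    1 / (√(m * n) * log (n / m)) ≤ 1 / √(m * n) + 1 / (n - m) := by
  have hn : 0 < n := hm.trans hmn
  have hnm : 0 < n - m := sub_pos.2 hmn
  have hlog : (n - m) / n ≤ log (n / m) := by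
    have := one_sub_inv_le_log_of_pos (div_pos hn hm)
    rwa [inv_div, one_sub_div hn.ne'] at this
  have hm_le_sqrt : m ≤ √(m * n) := Real.le_sqrt_of_sq_le (by nlinarith)
  have hsqrt : 0 < √(m * n) := hm.trans_le hm_le_sqrt
  calc 1 / (√(m * n) * log (n / m))
      ≤ 1 / (√(m * n) * ((n - m) / n)) := by gcongr
    _ = ((n - m) + m) / (√(m * n) * (n - m)) := by field_simp; ring
    _ ≤ ((n - m) + √(m * n)) / (√(m * n) * (n - m)) := by gcongr
    _ = 1 / √(m * n) + 1 / (n - m) := by field_simp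

lemma sum_Icc_inv_sqrt_le (n : ℕ) : ∑ m ∈ Icc 1 n, (√(m : ℝ))⁻¹ ≤ 2 * √(n : ℝ) := by
  induction n with
  | zero => simp
  | succ n ih =>
    rw [sum_Icc_succ_top (by omega), Nat.cast_succ]
    have hpos : 0 < √((n : ℝ) + 1) := Real.sqrt_pos.2 (by positivity)
    have hsq : √((n : ℝ) + 1) ^ 2 = n + 1 := Real.sq_sqrt (by positivity)
    have hsq' : √(n : ℝ) ^ 2 = n := Real.sq_sqrt (by positivity)
    -- `2 (√(n+1) - √n) = 2 / (√(n+1) + √n)`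
    have hstep : (√((n : ℝ) + 1))⁻¹ ≤ 2 * √((n : ℝ) + 1) - 2 * √(n : ℝ) := by
      rw [inv_le_iff_one_le_mul₀' hpos]
      nlinarith [sq_nonneg (√((n : ℝ) + 1) - √(n : ℝ))]
    linarith

lemma sum_Ico_inv_sub_le (n : ℕ) : ∑ m ∈ Ico 1 n, ((n : ℝ) - m)⁻¹ ≤ 1 + log n := by
  calc ∑ m ∈ Ico 1 n, ((n : ℝ) - m)⁻¹
      = ∑ m ∈ Ico 1 n, ((n - m : ℕ) : ℝ)⁻¹ := by
        refine sum_congr rfl fun m hm ↦ ?_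
        rw [Nat.cast_sub (mem_Ico.1 hm).2.le]
    _ = ∑ m ∈ Ico 1 n, (m : ℝ)⁻¹ := by
        rw [sum_Ico_reflect (fun j : ℕ ↦ (j : ℝ)⁻¹) 1 (Nat.le_succ n), Nat.add_sub_cancel_left,
          Nat.add_sub_cancel]
    _ ≤ ∑ m ∈ Icc 1 n, (m : ℝ)⁻¹ :=
        sum_le_sum_of_subset_of_nonneg Ico_subset_Icc_self fun _ _ _ ↦ by positivity
    _ = harmonic n := by simp [harmonic_eq_sum_Icc]
    _ ≤ 1 + log n := harmonic_le_one_add_log n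

lemma sum_Ico_one_div_sqrt_mul_mul_log_div_le (n : ℕ) :
    ∑ m ∈ Ico 1 n, 1 / (√((m : ℝ) * n) * log ((n : ℝ) / m)) ≤ 3 + log n := by
  have hsqrt : (√(n : ℝ))⁻¹ * ∑ m ∈ Ico 1 n, (√(m : ℝ))⁻¹ ≤ 2 :=
    calc (√(n : ℝ))⁻¹ * ∑ m ∈ Ico 1 n, (√(m : ℝ))⁻¹
        ≤ (√(n : ℝ))⁻¹ * (2 * √(n : ℝ)) := by
          gcongr
          exact (sum_le_sum_of_subset_of_nonneg Ico_subset_Icc_self fun _ _ _ ↦ by positivity).trans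
            (sum_Icc_inv_sqrt_le n)
      _ = 2 * ((√(n : ℝ))⁻¹ * √(n : ℝ)) := by ring
      _ ≤ 2 := mul_le_of_le_one_right zero_le_two inv_mul_le_one
  calc ∑ m ∈ Ico 1 n, 1 / (√((m : ℝ) * n) * log ((n : ℝ) / m))
      ≤ ∑ m ∈ Ico 1 n, (1 / √((m : ℝ) * n) + 1 / ((n : ℝ) - m)) := by
        refine sum_le_sum fun m hm ↦ ?_
        obtain ⟨hm1, hmn⟩ := mem_Ico.1 hm
        exact one_div_sqrt_mul_mul_log_div_le (by exact_mod_cast hm1) (by exact_mod_cast hmn)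
    _ = (√(n : ℝ))⁻¹ * ∑ m ∈ Ico 1 n, (√(m : ℝ))⁻¹ + ∑ m ∈ Ico 1 n, ((n : ℝ) - m)⁻¹ := by
        simp only [sum_add_distrib, mul_sum, one_div, sqrt_mul (Nat.cast_nonneg _), mul_inv,
          mul_comm]
    _ ≤ 2 + (1 + log n) := add_le_add hsqrt (sum_Ico_inv_sub_le n)
    _ = 3 + log n := by ring

lemma one_div_sqrt_mul_mul_log_div_nonneg {m n : ℕ} (hm : 1 ≤ m) (hmn : m < n) :
    0 ≤ 1 / (√((m : ℝ) * n) * log ((n : ℝ) / m)) := by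
  have hm' : (0 : ℝ) < m := by exact_mod_cast hm
  have : 0 < log ((n : ℝ) / m) := log_pos ((one_lt_div hm').2 (by exact_mod_cast hmn))
  positivity

lemma sum_Icc_sum_Ico_one_div_sqrt_mul_mul_log_div_le {T : ℝ} (hT : 1 ≤ T) :
    ∑ n ∈ Icc 1 ⌊T⌋₊, ∑ m ∈ Ico 1 n, 1 / (√((m : ℝ) * n) * log ((n : ℝ) / m))
      ≤ T * (3 + log T) := by
  have hfloor : (⌊T⌋₊ : ℝ) ≤ T := Nat.floor_le (by linarith)
  calc ∑ n ∈ Icc 1 ⌊T⌋₊, ∑ m ∈ Ico 1 n, 1 / (√((m : ℝ) * n) * log ((n : ℝ) / m))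
      ≤ ∑ n ∈ Icc 1 ⌊T⌋₊, (3 + log T) := by
        refine sum_le_sum fun n hn ↦ ?_
        obtain ⟨hn1, hnT⟩ := mem_Icc.1 hn
        have hnT : (n : ℝ) ≤ T := le_trans (by exact_mod_cast hnT) hfloor
        have := log_le_log (by exact_mod_cast hn1) hnT
        linarith [sum_Ico_one_div_sqrt_mul_mul_log_div_le n]
    _ = ⌊T⌋₊ * (3 + log T) := by simp [mul_add]
    _ ≤ T * (3 + log T) := by
        have := log_nonneg hT
        gcongr

theorem stmt_6 :
    (fun T : ℝ => ∑ n ∈ Finset.Icc 1 ⌊T⌋₊, ∑ m ∈ Finset.Ico 1 n,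
        1 / (Real.sqrt ((m : ℝ) * n) * Real.log ((n : ℝ) / m)))
      =O[atTop] (fun T : ℝ => T * Real.log T) := by
  have hbound : ∀ᶠ T in atTop, ‖∑ n ∈ Icc 1 ⌊T⌋₊, ∑ m ∈ Ico 1 n,
      1 / (√((m : ℝ) * n) * log ((n : ℝ) / m))‖ ≤ T * (3 + log T) := by
    filter_upwards [eventually_ge_atTop 1] with T hT
    rw [norm_of_nonneg (sum_nonneg fun n _ ↦ sum_nonneg fun m hm ↦
      one_div_sqrt_mul_mul_log_div_nonneg (mem_Ico.1 hm).1 (mem_Ico.1 hm).2)]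
    exact sum_Icc_sum_Ico_one_div_sqrt_mul_mul_log_div_le hT
  have hlog : (fun T : ℝ ↦ 3 + log T) =O[atTop] log :=
    isLittleO_const_log_atTop.isBigO.add (isBigO_refl _ _)
  exact (IsBigO.of_norm_eventuallyLE hbound).trans ((isBigO_refl _ _).mul hlog)
end

section
/- Let m ≠ n be positive integers with m, n ≤ T, let μ, ν ∈ ℝ be fixed, and let T′ ∈ [T, 2T]. Then ∫_{T′}^{2T} (m/n)^{it} (2πm)^{2πiμ/log t} (2πn)^{−2πiν/log t} dt = O(1/|log(m/n)|) as T → ∞, with implied constant depending only on μ and ν. -/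
/-!
Write the integrand as `e^{itℓ} u(t)` with `ℓ = log (m/n)` and `u(t) = exp (i c / log t)`, where
`c = 2π (μ log 2πm - ν log 2πn)`. Integrating by parts against `e^{itℓ} = (e^{itℓ} / (iℓ))'`
bounds the integral by `(|u(T')| + |u(2T)| + T sup |u'|) / |ℓ|`. Here `|u| = 1` and
`|u'(t)| = |c| / (t log² t) ≤ |c| / (T log² T)`, while `m, n ≤ T` gives `|c| ≤ 4π (|μ| + |ν|) log T`;
so the last term is at most `1` once `log T ≥ 4π (|μ| + |ν|)`.
-/

open Real MeasureTheory

theorem norm_integral_cexp_mul_le {u u' : ℝ → ℂ} {a b l M : ℝ} (hl : l ≠ 0)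
    (hu : ∀ x ∈ Set.uIcc a b, HasDerivAt u (u' x) x) (hu' : IntervalIntegrable u' volume a b)
    (hM : ∀ x ∈ Set.uIoc a b, ‖u' x‖ ≤ M) :
    ‖∫ t in a..b, Complex.exp (Complex.I * t * l) * u t‖ ≤ (‖u a‖ + ‖u b‖ + M * |b - a|) / |l| := by
  set v : ℝ → ℂ := fun t => Complex.exp (Complex.I * t * l) / (Complex.I * l)
  have hIl : Complex.I * l ≠ 0 := mul_ne_zero Complex.I_ne_zero (Complex.ofReal_ne_zero.mpr hl)
  have hv : ∀ x ∈ Set.uIcc a b, HasDerivAt v (Complex.exp (Complex.I * x * l)) x := by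
    intro x _
    have := ((((hasDerivAt_id x).ofReal_comp).const_mul Complex.I).mul_const (l : ℂ)).cexp.div_const
      (Complex.I * l)
    simpa [v, mul_div_assoc, div_self hIl] using this
  have hv_norm : ∀ t : ℝ, ‖v t‖ = |l|⁻¹ := by
    intro t
    simp [v, Complex.norm_exp, mul_comm Complex.I]
  have hexp_int : IntervalIntegrable (fun t : ℝ => Complex.exp (Complex.I * t * l)) volume a b :=
    (by fun_prop : Continuous fun t : ℝ => Complex.exp (Complex.I * t * l)).intervalIntegrable _ _
  have hparts := intervalIntegral.integral_mul_deriv_eq_deriv_mul hu hv hu' hexp_int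
  have hrem : ‖∫ t in a..b, u' t * v t‖ ≤ M * |l|⁻¹ * |b - a| :=
    intervalIntegral.norm_integral_le_of_norm_le_const fun x hx => by
      rw [norm_mul, hv_norm]
      exact mul_le_mul_of_nonneg_right (hM x hx) (by positivity)
  simp_rw [mul_comm (Complex.exp _) (u _)]
  rw [hparts]
  calc ‖u b * v b - u a * v a - ∫ t in a..b, u' t * v t‖
      ≤ ‖u b * v b‖ + ‖u a * v a‖ + ‖∫ t in a..b, u' t * v t‖ :=
        (norm_sub_le _ _).trans (add_le_add_left (norm_sub_le _ _) _)
    _ ≤ (‖u a‖ + ‖u b‖ + M * |b - a|) / |l| := by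
      rw [norm_mul, norm_mul, hv_norm, hv_norm, div_eq_mul_inv]
      linarith

theorem hasDerivAt_cexp_div_log (z : ℂ) {x : ℝ} (hx : x ≠ 0) (hlog : log x ≠ 0) :
    HasDerivAt (fun t : ℝ => Complex.exp (z / (log t : ℂ)))
      (Complex.exp (z / (log x : ℂ)) * (-z / (x * (log x : ℂ) ^ 2))) x := by
  have hlog' : (log x : ℂ) ≠ 0 := Complex.ofReal_ne_zero.mpr hlog
  have hx' : (x : ℂ) ≠ 0 := Complex.ofReal_ne_zero.mpr hx
  have := (((Real.hasDerivAt_log hx).ofReal_comp.inv hlog').const_mul z).cexp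
  convert this using 1
  · rfl
  · simp only [Pi.inv_apply, Complex.ofReal_inv]
    field_simp

theorem norm_cexp_I_mul_div_ofReal (c r : ℝ) : ‖Complex.exp (Complex.I * c / r)‖ = 1 := by
  rw [Complex.norm_exp]
  simp [Complex.div_re]

theorem norm_deriv_cexp_I_mul_div_log_le {c T x : ℝ} (hT : 1 < T) (hx : T ≤ x) :
    ‖Complex.exp (Complex.I * c / (log x : ℂ)) * (-(Complex.I * c) / (x * (log x : ℂ) ^ 2))‖
      ≤ |c| / (T * log T ^ 2) := by
  have hlogT : 0 < log T := log_pos hT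
  have hlog : log T ≤ log x := log_le_log (by linarith) hx
  rw [norm_mul, norm_cexp_I_mul_div_ofReal, one_mul, norm_div, norm_neg, norm_mul, norm_mul,
    norm_pow]
  simp only [Complex.norm_I, Complex.norm_real, Real.norm_eq_abs, one_mul,
    abs_of_pos (by linarith : 0 < x), abs_of_pos (by linarith : 0 < log x)]
  gcongr
  linarith

theorem norm_integral_cexp_mul_cexp_div_log_le {c l T T' : ℝ} (hl : l ≠ 0) (hT : 1 < T)
    (hTT' : T ≤ T') (hT'T : T' ≤ 2 * T) :
    ‖∫ t in T'..2 * T,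
        Complex.exp (Complex.I * t * l) * Complex.exp (Complex.I * c / (log t : ℂ))‖
      ≤ (2 + |c| / log T ^ 2) / |l| := by
  have hmem : ∀ x ∈ Set.uIcc T' (2 * T), T ≤ x := fun x hx => by
    rw [Set.uIcc_of_le hT'T] at hx
    exact hTT'.trans hx.1
  have hderiv : ∀ x ∈ Set.uIcc T' (2 * T), HasDerivAt
      (fun t : ℝ => Complex.exp (Complex.I * c / (log t : ℂ)))
      (Complex.exp (Complex.I * c / (log x : ℂ)) * (-(Complex.I * c) / (x * (log x : ℂ) ^ 2))) x :=
    fun x hx => hasDerivAt_cexp_div_log _ (by linarith [hmem x hx])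
      (log_pos (by linarith [hmem x hx])).ne'
  have hne : ∀ x ∈ Set.uIcc T' (2 * T), (x : ℂ) ≠ 0 ∧ (log x : ℂ) ≠ 0 := fun x hx =>
    ⟨Complex.ofReal_ne_zero.mpr (by linarith [hmem x hx]),
      Complex.ofReal_ne_zero.mpr (log_pos (by linarith [hmem x hx])).ne'⟩
  have hlog : ContinuousOn (fun x : ℝ => (log x : ℂ)) (Set.uIcc T' (2 * T)) :=
    Complex.continuous_ofReal.comp_continuousOn
      (continuousOn_log.mono fun x hx => Complex.ofReal_ne_zero.mp (hne x hx).1)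
  have hcont : ContinuousOn (fun x : ℝ => Complex.exp (Complex.I * c / (log x : ℂ)) *
      (-(Complex.I * c) / (x * (log x : ℂ) ^ 2))) (Set.uIcc T' (2 * T)) :=
    (continuousOn_const.div hlog fun x hx => (hne x hx).2).cexp.mul
      (continuousOn_const.div (Complex.continuous_ofReal.continuousOn.mul (hlog.pow 2))
        fun x hx => mul_ne_zero (hne x hx).1 (pow_ne_zero 2 (hne x hx).2))
  have hbound := norm_integral_cexp_mul_le hl hderiv hcont.intervalIntegrable
    fun x hx => norm_deriv_cexp_I_mul_div_log_le hT (hmem x (Set.uIoc_subset_uIcc hx))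
  refine hbound.trans (div_le_div_of_nonneg_right ?_ (abs_nonneg l))
  rw [norm_cexp_I_mul_div_ofReal, norm_cexp_I_mul_div_ofReal,
    abs_of_nonneg (by linarith : 0 ≤ 2 * T - T')]
  have : |c| / (T * log T ^ 2) * (2 * T - T') ≤ |c| / log T ^ 2 := by
    calc |c| / (T * log T ^ 2) * (2 * T - T') ≤ |c| / (T * log T ^ 2) * T := by
          gcongr; linarith
      _ = |c| / log T ^ 2 := by field_simp
  linarith

theorem abs_log_two_pi_mul_le {k : ℕ} {T : ℝ} (hk : 0 < k) (hkT : (k : ℝ) ≤ T)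
    (hT : 2 * π ≤ T) : |log (2 * π * k)| ≤ 2 * log T := by
  have hk1 : (1 : ℝ) ≤ k := Nat.one_le_cast.mpr hk
  have h2π : 1 ≤ 2 * π := by linarith [pi_gt_three]
  rw [abs_of_nonneg (log_nonneg (by nlinarith))]
  calc log (2 * π * k) ≤ log (T ^ 2) := log_le_log (by positivity) (by nlinarith)
    _ = 2 * log T := by rw [log_pow]; norm_num

theorem abs_phase_coeff_le {μ ν T : ℝ} {m n : ℕ} (hm : 0 < m) (hn : 0 < n) (hmT : (m : ℝ) ≤ T)
    (hnT : (n : ℝ) ≤ T) (hT : 2 * π ≤ T) :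
    |2 * π * μ * log (2 * π * m) - 2 * π * ν * log (2 * π * n)|
      ≤ 4 * π * (|μ| + |ν|) * log T := by
  have hlm := abs_log_two_pi_mul_le hm hmT hT
  have hln := abs_log_two_pi_mul_le hn hnT hT
  calc _ ≤ |2 * π * μ * log (2 * π * m)| + |2 * π * ν * log (2 * π * n)| := abs_sub _ _
    _ = 2 * π * (|μ| * |log (2 * π * m)| + |ν| * |log (2 * π * n)|) := by
      simp only [abs_mul, abs_of_pos pi_pos, abs_two]; ring
    _ ≤ 2 * π * (|μ| * (2 * log T) + |ν| * (2 * log T)) := by gcongr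
    _ = 4 * π * (|μ| + |ν|) * log T := by ring

theorem stmt_18 (μ ν : ℝ) :
    ∃ C > 0, ∃ T₀ : ℝ, ∀ T ≥ T₀, ∀ m n : ℕ, 0 < m → 0 < n → m ≠ n →
      (m:ℝ) ≤ T → (n:ℝ) ≤ T → ∀ T' : ℝ, T ≤ T' → T' ≤ 2*T →
        ‖∫ t in T'..(2*T),
            Complex.exp (Complex.I * t * Real.log ((m:ℝ)/n)) *
              Complex.exp ((2*π*Complex.I*μ * Real.log (2*π*m)) / (Real.log t : ℂ)) *
              Complex.exp (-(2*π*Complex.I*ν * Real.log (2*π*n)) / (Real.log t : ℂ))‖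
          ≤ C / |Real.log ((m:ℝ)/n)| := by
  set A := 4 * π * (|μ| + |ν|)
  refine ⟨3, by norm_num, max (2 * π) (exp A), fun T hT m n hm hn hmn hmT hnT T' hTT' hT'T => ?_⟩
  have h2πT : 2 * π ≤ T := le_of_max_le_left hT
  have hAlogT : A ≤ log T :=
    (le_log_iff_exp_le (by linarith [pi_gt_three])).mpr (le_of_max_le_right hT)
  have hlogT : 0 < log T := log_pos (by linarith [pi_gt_three])
  have hl : log ((m : ℝ) / n) ≠ 0 := by
    refine log_ne_zero_of_pos_of_ne_one (by positivity) fun h => hmn ?_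
    rw [div_eq_one_iff_eq (by positivity)] at h
    exact_mod_cast h
  set c := 2 * π * μ * log (2 * π * m) - 2 * π * ν * log (2 * π * n)
  have hc : |c| / log T ^ 2 ≤ 1 := by
    rw [div_le_one (by positivity), sq]
    exact (abs_phase_coeff_le hm hn hmT hnT h2πT).trans
      (mul_le_mul_of_nonneg_right hAlogT hlogT.le)
  have hintegrand : ∀ t : ℝ,
      Complex.exp (Complex.I * t * Real.log ((m:ℝ)/n)) *
        Complex.exp ((2*π*Complex.I*μ * Real.log (2*π*m)) / (Real.log t : ℂ)) *
        Complex.exp (-(2*π*Complex.I*ν * Real.log (2*π*n)) / (Real.log t : ℂ))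
      = Complex.exp (Complex.I * t * Real.log ((m:ℝ)/n)) *
        Complex.exp (Complex.I * c / (log t : ℂ)) := fun t => by
    rw [mul_assoc, ← Complex.exp_add]
    congr 2
    simp only [c]
    push_cast
    ring
  simp_rw [hintegrand]
  refine (norm_integral_cexp_mul_cexp_div_log_le hl (by linarith [pi_gt_three]) hTT' hT'T).trans ?_
  gcongr
  linarith
end
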